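/- Let U ⊆ ℝ⁴ be open and let ω¹, ω², ω³, φ be smooth 1-forms on U that are pointwise linearly independent, together with smooth functions a₁, a₂, K on U, satisfying the sub-Riemannian structure equations: dω¹ = φ∧ω² + (a₁ω¹ + a₂ω²)∧ω³; dω² = −φ∧ω¹ + (a₂ω¹ − a₁ω²)∧ω³; dω³ = ω¹∧ω²; and dφ = K ω¹∧ω² + ρ∧ω³ for some smooth 1-form ρ. Suppose further that there are smooth functions s₁, s₂, b₁, b₂, k₁, k₂, c₁, c₂, c₃ on U with da₁ = 2a₂φ + (s₁+b₂)ω¹ + (s₂+b₁)ω² + c₁ω³, da₂ = −2a₁φ + (s₂−b₁)ω¹ + (b₂−s₁)ω² + c₂ω³, and dK = k₁ω¹ + k₂ω² + c₃ω³. On Z = U × ℝ with last coordinate x, set A = (1/10)(a₂ + 3x² − 3K), B = (1/10)(s₂ − 3k₁ − 6a₁x − 21b₁), and define the 1-forms (pulling the ω's, φ and the functions back to Z): θ₀ = ω³, θ₁ = ω², θ₂ = φ − xω¹ + Aω³, θ₃ = dx − a₁ω¹ − (a₂+A)ω² + Bω³, σ = ω¹ − (3/5)xω³. Then there exist smooth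 1-forms α, β, γ and smooth functions I₀, T₁, T₆, T₇ on Z such that the following structure equations hold with T₂ = 0, T₃ = 3/5, T₄ = −1: dσ = α∧σ + θ₀∧(T₁θ₁ + T₂θ₂ + T₃θ₃) + T₄ θ₁∧θ₂; dθ₀ = β∧θ₀ + σ∧θ₁; dθ₁ = (β−α)∧θ₁ + γ∧θ₀ + σ∧θ₂; dθ₂ = (β−2α)∧θ₂ + (4/3)γ∧θ₁ + σ∧θ₃; dθ₃ = (β−3α)∧θ₃ + γ∧θ₂ + I₀ σ∧θ₀ + T₆ θ₀∧θ₁ + T₇ θ₀∧θ₂. -/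

import Mathlib

noncomputable section

/-- The exterior derivative of a smooth 1-form `η`, as a scalar-valued 2-form. -/
def d1 {E : Type*} [NormedAddCommGroup E] [NormedSpace ℝ E]
    (η : E → (E →L[ℝ] ℝ)) (x u v : E) : ℝ :=
  fderiv ℝ η x u v - fderiv ℝ η x v u

/-- The wedge product of two 1-forms, as a scalar-valued 2-form. -/
def wedge {E : Type*} [NormedAddCommGroup E] [NormedSpace ℝ E]
    (η ζ : E → (E →L[ℝ] ℝ)) (x u v : E) : ℝ :=
  η x u * ζ x v - η x v * ζ x u

/-- `Z = U × ℝ`, modelled on `(Fin 4 → ℝ) × ℝ`. -/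
abbrev Z : Type := (Fin 4 → ℝ) × ℝ

/-- Pullback of a 1-form on `ℝ⁴` to `Z = ℝ⁴ × ℝ` via the projection. -/
def pb (η : (Fin 4 → ℝ) → ((Fin 4 → ℝ) →L[ℝ] ℝ)) (z : Z) : Z →L[ℝ] ℝ :=
  (η z.1).comp (ContinuousLinearMap.fst ℝ (Fin 4 → ℝ) ℝ)

/-- The differential of the last coordinate `x` on `Z`. -/
def dxZ : Z →L[ℝ] ℝ := ContinuousLinearMap.snd ℝ (Fin 4 → ℝ) ℝ

/-- `A = (1/10)(a₂ + 3x² − 3K)`. -/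
def Afun (a2 K : (Fin 4 → ℝ) → ℝ) (z : Z) : ℝ :=
  (1 / 10) * (a2 z.1 + 3 * z.2 ^ 2 - 3 * K z.1)

/-- `B = (1/10)(s₂ − 3k₁ − 6a₁x − 21b₁)`. -/
def Bfun (a1 s2 k1 b1 : (Fin 4 → ℝ) → ℝ) (z : Z) : ℝ :=
  (1 / 10) * (s2 z.1 - 3 * k1 z.1 - 6 * a1 z.1 * z.2 - 21 * b1 z.1)

/-- `θ₀ = ω³`. -/
def θ₀Z (ω3 : (Fin 4 → ℝ) → ((Fin 4 → ℝ) →L[ℝ] ℝ)) (z : Z) : Z →L[ℝ] ℝ := pb ω3 z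

/-- `θ₁ = ω²`. -/
def θ₁Z (ω2 : (Fin 4 → ℝ) → ((Fin 4 → ℝ) →L[ℝ] ℝ)) (z : Z) : Z →L[ℝ] ℝ := pb ω2 z

/-- `θ₂ = φ − xω¹ + Aω³`. -/
def θ₂Z (φ ω1 ω3 : (Fin 4 → ℝ) → ((Fin 4 → ℝ) →L[ℝ] ℝ)) (a2 K : (Fin 4 → ℝ) → ℝ)
    (z : Z) : Z →L[ℝ] ℝ :=
  pb φ z - z.2 • pb ω1 z + Afun a2 K z • pb ω3 z

/-- `θ₃ = dx − a₁ω¹ − (a₂+A)ω² + Bω³`. -/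
def θ₃Z (ω1 ω2 ω3 : (Fin 4 → ℝ) → ((Fin 4 → ℝ) →L[ℝ] ℝ))
    (a1 a2 K s2 k1 b1 : (Fin 4 → ℝ) → ℝ) (z : Z) : Z →L[ℝ] ℝ :=
  dxZ - a1 z.1 • pb ω1 z - (a2 z.1 + Afun a2 K z) • pb ω2 z
    + Bfun a1 s2 k1 b1 z • pb ω3 z

/-- `σ = ω¹ − (3/5)xω³`. -/
def σZ (ω1 ω3 : (Fin 4 → ℝ) → ((Fin 4 → ℝ) →L[ℝ] ℝ)) (z : Z) : Z →L[ℝ] ℝ :=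
  pb ω1 z - (3 / 5 * z.2) • pb ω3 z

/-! ### Auxiliary general lemmas -/

section Aux

variable {E : Type*} [NormedAddCommGroup E] [NormedSpace ℝ E]

theorem fd_apply {F : Type*} [NormedAddCommGroup F] [NormedSpace ℝ F]
    {η : E → (E →L[ℝ] F)} {x : E} (h : DifferentiableAt ℝ η x) (u v : E) :
    fderiv ℝ (fun y => η y v) x u = fderiv ℝ η x u v := by
  rw [fderiv_clm_apply h (differentiableAt_const v)]; simp

theorem diff_apply {F : Type*} [NormedAddCommGroup F] [NormedSpace ℝ F]
    {η : E → (E →L[ℝ] F)} {x : E} (h : DifferentiableAt ℝ η x) (v : E) :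
    DifferentiableAt ℝ (fun y => η y v) x :=
  h.clm_apply (differentiableAt_const v)

theorem diff_wedge {η ζ : E → (E →L[ℝ] ℝ)} {x : E}
    (hη : DifferentiableAt ℝ η x) (hζ : DifferentiableAt ℝ ζ x) (v w : E) :
    DifferentiableAt ℝ (fun y => wedge η ζ y v w) x :=
  ((diff_apply hη v).mul (diff_apply hζ w)).sub ((diff_apply hη w).mul (diff_apply hζ v))

theorem d1_cyc {η : E → (E →L[ℝ] ℝ)} {x : E}
    (h1 : ∀ᶠ y in nhds x, DifferentiableAt ℝ η y)
    (h2 : DifferentiableAt ℝ (fderiv ℝ η) x) (u v w : E) :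
    fderiv ℝ (fun y => d1 η y v w) x u + fderiv ℝ (fun y => d1 η y w u) x v
      + fderiv ℝ (fun y => d1 η y u v) x w = 0 := by
  have hsymm : ∀ a b : E, fderiv ℝ (fderiv ℝ η) x a b = fderiv ℝ (fderiv ℝ η) x b a := by
    intro a b
    exact (second_derivative_symmetric_of_eventually
      (by filter_upwards [h1] with y hy using hy.hasFDerivAt) h2.hasFDerivAt a b)
  have e1 : ∀ a b c : E, fderiv ℝ (fun y => fderiv ℝ η y a b) x c
      = fderiv ℝ (fderiv ℝ η) x c a b := by
    intro a b c
    have hga : DifferentiableAt ℝ (fun y => fderiv ℝ η y a) x := diff_apply h2 a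
    rw [fd_apply hga c b, fd_apply h2 c a]
  have e2 : ∀ a b c : E, fderiv ℝ (fun y => d1 η y a b) x c
      = fderiv ℝ (fderiv ℝ η) x c a b - fderiv ℝ (fderiv ℝ η) x c b a := by
    intro a b c
    have : (fun y => d1 η y a b)
        = fun y => (fun y => fderiv ℝ η y a b) y - (fun y => fderiv ℝ η y b a) y := rfl
    rw [this, fderiv_fun_sub (diff_apply (diff_apply h2 a) b) (diff_apply (diff_apply h2 b) a)]
    rw [ContinuousLinearMap.sub_apply, e1, e1]
  rw [e2, e2, e2, hsymm u w, hsymm u v, hsymm v w]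
  ring

theorem fd_wedge {η ζ : E → (E →L[ℝ] ℝ)} {x : E}
    (hη : DifferentiableAt ℝ η x) (hζ : DifferentiableAt ℝ ζ x) (u v w : E) :
    fderiv ℝ (fun y => wedge η ζ y v w) x u
      = fderiv ℝ η x u v * ζ x w + η x v * fderiv ℝ ζ x u w
        - fderiv ℝ η x u w * ζ x v - η x w * fderiv ℝ ζ x u v := by
  have : (fun y => wedge η ζ y v w)
      = fun y => (fun y => η y v) y * (fun y => ζ y w) y
        - (fun y => η y w) y * (fun y => ζ y v) y := rfl
  rw [this, fderiv_fun_sub ((diff_apply hη v).fun_mul (diff_apply hζ w))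
      ((diff_apply hη w).fun_mul (diff_apply hζ v)),
    fderiv_fun_mul (diff_apply hη v) (diff_apply hζ w),
    fderiv_fun_mul (diff_apply hη w) (diff_apply hζ v)]
  simp only [ContinuousLinearMap.sub_apply, ContinuousLinearMap.add_apply,
    ContinuousLinearMap.smul_apply, fd_apply hη, fd_apply hζ, smul_eq_mul]
  ring

theorem fd_cwedge {c : E → ℝ} {η ζ : E → (E →L[ℝ] ℝ)} {x : E}
    (hc : DifferentiableAt ℝ c x)
    (hη : DifferentiableAt ℝ η x) (hζ : DifferentiableAt ℝ ζ x) (u v w : E) :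
    fderiv ℝ (fun y => c y * wedge η ζ y v w) x u
      = fderiv ℝ c x u * wedge η ζ x v w
        + c x * (fderiv ℝ η x u v * ζ x w + η x v * fderiv ℝ ζ x u w
          - fderiv ℝ η x u w * ζ x v - η x w * fderiv ℝ ζ x u v) := by
  rw [fderiv_fun_mul hc (diff_wedge hη hζ v w)]
  simp only [ContinuousLinearMap.add_apply, ContinuousLinearMap.smul_apply, smul_eq_mul,
    fd_wedge hη hζ]
  ring

end Aux

/-! ### Frames dual to a coframe of four 1-forms on `ℝ⁴` -/

abbrev E4 : Type := Fin 4 → ℝ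
abbrev V4 : Type := E4 →L[ℝ] ℝ

def Tpt (f : Fin 4 → V4) : E4 →L[ℝ] E4 :=
  ∑ i : Fin 4, (f i).smulRight (Pi.single i 1)

theorem Tpt_apply (f : Fin 4 → V4) (v : E4) (j : Fin 4) : Tpt f v j = f j v := by
  simp [Tpt, ContinuousLinearMap.sum_apply, Finset.sum_apply, Pi.single_apply]

theorem finrank_V4 : Module.finrank ℝ V4 = 4 := by
  rw [← LinearEquiv.finrank_eq (LinearMap.toContinuousLinearMap :
    (E4 →ₗ[ℝ] ℝ) ≃ₗ[ℝ] V4)]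
  simp [Module.finrank_linearMap]

theorem Tpt_bij {f : Fin 4 → V4} (hf : LinearIndependent ℝ f) :
    Function.Bijective (Tpt f) := by
  have hinj : Function.Injective (Tpt f) := by
    intro v w hvw
    have hv : Tpt f (v - w) = 0 := by rw [map_sub, hvw, sub_self]
    have hz : v - w = 0 := by
      set u := v - w with hu
      have hv' : ∀ j, f j u = 0 := by
        intro j; rw [← Tpt_apply f u j]
        simpa using congrFun (show Tpt f u = 0 from hv) j
      let b := basisOfLinearIndependentOfCardEqFinrank hf (by simp [finrank_V4])
      have hb : ⇑b = f := coe_basisOfLinearIndependentOfCardEqFinrank hf _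
      funext j
      have hr := b.sum_repr (ContinuousLinearMap.proj j : V4)
      have : (ContinuousLinearMap.proj j : V4) u
          = (∑ i, b.repr (ContinuousLinearMap.proj j) i • b i) u := by rw [hr]
      simpa [ContinuousLinearMap.sum_apply, hb, hv'] using this
    exact sub_eq_zero.mp hz
  refine ⟨hinj, ?_⟩
  have := (LinearMap.injective_iff_surjective (f := (Tpt f).toLinearMap)).mp hinj
  exact this

def TptEquiv {f : Fin 4 → V4} (hf : LinearIndependent ℝ f) : E4 ≃L[ℝ] E4 :=
  ContinuousLinearEquiv.ofBijective (Tpt f)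
    (LinearMap.ker_eq_bot.mpr (Tpt_bij hf).1)
    (LinearMap.range_eq_top.mpr (Tpt_bij hf).2)

theorem TptEquiv_coe {f : Fin 4 → V4} (hf : LinearIndependent ℝ f) :
    (TptEquiv hf : E4 →L[ℝ] E4) = Tpt f := by
  ext v; rfl

def frameV (f : Fin 4 → V4) (i : Fin 4) : E4 :=
  ContinuousLinearMap.inverse (Tpt f) (Pi.single i 1)

theorem Tpt_frameV {f : Fin 4 → V4} (hf : LinearIndependent ℝ f) (i : Fin 4) :
    Tpt f (frameV f i) = Pi.single i 1 := by
  rw [frameV, ← TptEquiv_coe hf, ContinuousLinearMap.inverse_equiv]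
  exact (TptEquiv hf).apply_symm_apply _

theorem frameV_pair {f : Fin 4 → V4} (hf : LinearIndependent ℝ f) (i j : Fin 4) :
    f j (frameV f i) = if i = j then 1 else 0 := by
  rw [← Tpt_apply f, Tpt_frameV hf, Pi.single_apply]
  simp [eq_comm]

theorem frameV_decomp {f : Fin 4 → V4} (hf : LinearIndependent ℝ f) (v : E4) :
    v = ∑ j, f j v • frameV f j := by
  have h1 : Tpt f v = ∑ j, f j v • (Pi.single j 1 : E4) := by
    funext k
    rw [Tpt_apply]
    simp [Finset.sum_apply, Pi.single_apply]
  have h2 := congrArg (TptEquiv hf).symm (h1)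
  have h3 : (TptEquiv hf).symm (Tpt f v) = v := by
    rw [← TptEquiv_coe hf]; exact (TptEquiv hf).symm_apply_apply v
  rw [h3] at h2
  have hfr : ∀ j : Fin 4, frameV f j = (TptEquiv hf).symm (Pi.single j 1) := by
    intro j
    rw [frameV, ← TptEquiv_coe hf, ContinuousLinearMap.inverse_equiv]
    rfl
  calc v = (TptEquiv hf).symm (∑ j, f j v • (Pi.single j 1 : E4)) := h2
    _ = ∑ j, f j v • frameV f j := by
        rw [map_sum]
        refine Finset.sum_congr rfl fun j _ => ?_
        rw [map_smul, hfr]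

theorem clm_decomp {f : Fin 4 → V4} (hf : LinearIndependent ℝ f) (g : V4) (v : E4) :
    g v = ∑ j, f j v * g (frameV f j) := by
  conv_lhs => rw [frameV_decomp hf v]
  rw [map_sum]
  congr 1; funext j
  rw [map_smul]; rfl

theorem Tpt_smooth {U : Set E4} {c : E4 → Fin 4 → V4}
    (hc : ∀ i, ContDiffOn ℝ (⊤ : ℕ∞) (fun x => c x i) U) :
    ContDiffOn ℝ (⊤ : ℕ∞) (fun x => Tpt (c x)) U := by
  have : (fun x => Tpt (c x))
      = fun x => ∑ i : Fin 4, ((ContinuousLinearMap.smulRightL ℝ E4 E4).flip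
          (Pi.single i 1)) (c x i) := by
    funext x
    simp only [ContinuousLinearMap.flip_apply]
    rfl
  rw [this]
  exact ContDiffOn.sum fun i _ =>
    (((ContinuousLinearMap.smulRightL ℝ E4 E4).flip (Pi.single i 1)).contDiff).comp_contDiffOn
      (hc i)

theorem frameV_smooth {U : Set E4} (hU : IsOpen U) {c : E4 → Fin 4 → V4}
    (hc : ∀ i, ContDiffOn ℝ (⊤ : ℕ∞) (fun x => c x i) U)
    (hli : ∀ x ∈ U, LinearIndependent ℝ (c x)) (i : Fin 4) :
    ContDiffOn ℝ (⊤ : ℕ∞) (fun x => frameV (c x) i) U := by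
  intro x hx
  have hT : ContDiffAt ℝ (⊤ : ℕ∞) (fun x => Tpt (c x)) x :=
    (Tpt_smooth hc x hx).contDiffAt (hU.mem_nhds hx)
  have hinv : ContDiffAt ℝ (⊤ : ℕ∞)
      (fun y => ContinuousLinearMap.inverse (Tpt (c y))) x := by
    have h1 : ContDiffAt ℝ (⊤ : ℕ∞) ContinuousLinearMap.inverse (Tpt (c x)) := by
      have := contDiffAt_map_inverse (n := (⊤ : ℕ∞)) (TptEquiv (hli x hx))
      rwa [TptEquiv_coe] at this
    exact h1.comp x hT
  exact ((hinv.clm_apply contDiffAt_const).contDiffWithinAt :)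

/-! ### Lemmas about forms on `Z` -/

theorem hasFDerivAt_pb {η : E4 → V4} {z : Z} (h : DifferentiableAt ℝ η z.1) :
    HasFDerivAt (pb η)
      (((ContinuousLinearMap.compL ℝ Z E4 ℝ).flip
          (ContinuousLinearMap.fst ℝ E4 ℝ)).comp
        ((fderiv ℝ η z.1).comp (ContinuousLinearMap.fst ℝ E4 ℝ))) z := by
  have h3 : HasFDerivAt (fun z : Z => η z.1)
      ((fderiv ℝ η z.1).comp (ContinuousLinearMap.fst ℝ E4 ℝ)) z :=
    h.hasFDerivAt.comp z hasFDerivAt_fst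
  exact (((ContinuousLinearMap.compL ℝ Z E4 ℝ).flip
    (ContinuousLinearMap.fst ℝ E4 ℝ)).hasFDerivAt).comp z h3

theorem diff_pb {η : E4 → V4} {z : Z} (h : DifferentiableAt ℝ η z.1) :
    DifferentiableAt ℝ (pb η) z := (hasFDerivAt_pb h).differentiableAt

theorem fderiv_pb {η : E4 → V4} {z : Z} (h : DifferentiableAt ℝ η z.1) (u v : Z) :
    fderiv ℝ (pb η) z u v = fderiv ℝ η z.1 u.1 v.1 := by
  rw [(hasFDerivAt_pb h).fderiv]; rfl

theorem d1_pb {η : E4 → V4} {z : Z} (h : DifferentiableAt ℝ η z.1) (u v : Z) :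
    d1 (pb η) z u v = d1 η z.1 u.1 v.1 := by
  simp only [d1, fderiv_pb h]

theorem d1_congr {g1 g2 : Z → (Z →L[ℝ] ℝ)} (h : ∀ z, g1 z = g2 z) {z u v} :
    d1 g1 z u v = d1 g2 z u v := by rw [show g1 = g2 from funext h]

theorem d1_sub {g1 g2 : Z → (Z →L[ℝ] ℝ)} {z : Z} (h1 : DifferentiableAt ℝ g1 z)
    (h2 : DifferentiableAt ℝ g2 z) (u v : Z) :
    d1 (fun z => g1 z - g2 z) z u v = d1 g1 z u v - d1 g2 z u v := by
  simp only [d1, fderiv_fun_sub h1 h2, ContinuousLinearMap.sub_apply]; ring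

theorem d1_add {g1 g2 : Z → (Z →L[ℝ] ℝ)} {z : Z} (h1 : DifferentiableAt ℝ g1 z)
    (h2 : DifferentiableAt ℝ g2 z) (u v : Z) :
    d1 (fun z => g1 z + g2 z) z u v = d1 g1 z u v + d1 g2 z u v := by
  simp only [d1, fderiv_fun_add h1 h2, ContinuousLinearMap.add_apply]; ring

theorem d1_smul {f : Z → ℝ} {g : Z → (Z →L[ℝ] ℝ)} {z : Z}
    (hf : DifferentiableAt ℝ f z) (hg : DifferentiableAt ℝ g z) (u v : Z) :
    d1 (fun z => f z • g z) z u v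
      = fderiv ℝ f z u * g z v - fderiv ℝ f z v * g z u + f z * d1 g z u v := by
  simp only [d1, fderiv_fun_smul hf hg]
  simp only [ContinuousLinearMap.add_apply, ContinuousLinearMap.smul_apply,
    ContinuousLinearMap.smulRight_apply, smul_eq_mul]
  ring

theorem d1_constZ (c : Z →L[ℝ] ℝ) (z u v : Z) : d1 (fun _ => c) z u v = 0 := by
  simp [d1, fderiv_const]

/-! ### The connection forms and invariants -/

def cf (ω1 ω2 ω3 φ : E4 → V4) : E4 → Fin 4 → V4 := fun y => ![ω1 y, ω2 y, ω3 y, φ y]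

/-- `μ = (1/10)(ds₂ − 3dk₁ − 21db₁)`. -/
def muC (s2 k1 b1 : E4 → ℝ) : E4 → V4 :=
  fun y => ((1:ℝ)/10) • (fderiv ℝ s2 y - (3:ℝ) • fderiv ℝ k1 y - (21:ℝ) • fderiv ℝ b1 y)

/-- component of a 1-form in the coframe -/
def cmpF (ω1 ω2 ω3 φ : E4 → V4) (η : E4 → V4) (i : Fin 4) : E4 → ℝ :=
  fun y => η y (frameV (cf ω1 ω2 ω3 φ y) i)

def αW (ω2 ω3 : E4 → V4) (a1 : E4 → ℝ) : Z → (Z →L[ℝ] ℝ) :=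
  fun z => (-(2/5) * a1 z.1) • pb ω3 z + (-(2/5) * z.2) • pb ω2 z

def βW (ω2 ω3 : E4 → V4) (a1 : E4 → ℝ) : Z → (Z →L[ℝ] ℝ) :=
  fun z => (-(3/5) * a1 z.1) • pb ω3 z + (-(3/5) * z.2) • pb ω2 z

def g0W (ω1 ω2 ω3 φ ρ : E4 → V4) (a2 K s1 b2 k2 : E4 → ℝ) : Z → ℝ :=
  fun z => (3/4) * ((3/25) * K z.1 * z.2 + (29/25) * a2 z.1 * z.2 - (1/10) * b2 z.1
    + (3/10) * k2 z.1 - cmpF ω1 ω2 ω3 φ ρ 1 z.1 + (1/10) * s1 z.1 - (3/25) * z.2 ^ 3)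

def γW (ω1 ω2 ω3 φ ρ : E4 → V4) (a1 a2 K s1 b2 k2 : E4 → ℝ) : Z → (Z →L[ℝ] ℝ) :=
  fun z => ((3:ℝ)/10 * (K z.1 + 3 * a2 z.1 - z.2 ^ 2)) • σZ ω1 ω3 z
    + g0W ω1 ω2 ω3 φ ρ a2 K s1 b2 k2 z • pb ω3 z
    + (-(6/5) * a1 z.1) • pb ω2 z + (-(3/5) * z.2) • θ₂Z φ ω1 ω3 a2 K z

def T1W (a2 K : E4 → ℝ) : Z → ℝ :=
  fun z => (1/25) * (3 * K z.1 - 11 * a2 z.1 + 3 * z.2 ^ 2)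

def I0W (ω1 ω2 ω3 φ : E4 → V4) (a1 a2 K s1 s2 b1 b2 c1 k1 : E4 → ℝ) : Z → ℝ :=
  fun z => (9/100) * K z.1 ^ 2 + (27/50) * K z.1 * a2 z.1 - (9/50) * K z.1 * z.2 ^ 2
    - (8/5) * a1 z.1 ^ 2 - (119/100) * a2 z.1 ^ 2 - (87/50) * a2 z.1 * z.2 ^ 2
    - (3/5) * b2 z.1 * z.2 + c1 z.1 + cmpF ω1 ω2 ω3 φ (muC s2 k1 b1) 0 z.1
    + cmpF ω1 ω2 ω3 φ (muC s2 k1 b1) 3 z.1 * z.2 - (3/5) * s1 z.1 * z.2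
    + (9/100) * z.2 ^ 4

def T6W (ω1 ω2 ω3 φ : E4 → V4) (a1 a2 K s2 b1 c2 c3 k1 : E4 → ℝ) : Z → ℝ :=
  fun z => (12/25) * K z.1 * a1 z.1 + (11/25) * a1 z.1 * a2 z.1
    - (21/25) * a1 z.1 * z.2 ^ 2 - (33/50) * b1 z.1 * z.2 - (11/10) * c2 z.1
    + (3/10) * c3 z.1 - (9/50) * k1 z.1 * z.2
    - cmpF ω1 ω2 ω3 φ (muC s2 k1 b1) 1 z.1 + (33/50) * s2 z.1 * z.2

def T7W (ω1 ω2 ω3 φ ρ : E4 → V4) (a2 K s1 s2 b1 b2 k1 k2 : E4 → ℝ) : Z → ℝ :=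
  fun z => (9/50) * K z.1 * z.2 + (87/50) * a2 z.1 * z.2
    - cmpF ω1 ω2 ω3 φ (muC s2 k1 b1) 3 z.1 - (9/50) * z.2 ^ 3
    - g0W ω1 ω2 ω3 φ ρ a2 K s1 b2 k2 z


theorem diffOn_top {E F : Type*} [NormedAddCommGroup E] [NormedSpace ℝ E]
    [NormedAddCommGroup F] [NormedSpace ℝ F] {f : E → F} {U : Set E}
    (hf : ContDiffOn ℝ (⊤ : ℕ∞) f U) : DifferentiableOn ℝ f U :=
  hf.differentiableOn (by simp)

theorem fderiv_smoothOn {E F : Type*} [NormedAddCommGroup E] [NormedSpace ℝ E]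
    [NormedAddCommGroup F] [NormedSpace ℝ F] {f : E → F} {U : Set E} (hU : IsOpen U)
    (hf : ContDiffOn ℝ (⊤ : ℕ∞) f U) : ContDiffOn ℝ (⊤ : ℕ∞) (fderiv ℝ f) U :=
  hf.fderiv_of_isOpen hU (n := ((⊤ : ℕ∞) : WithTop ℕ∞)) (by norm_cast)

/-! ### Bianchi identities -/

set_option maxHeartbeats 1000000 in
theorem bianchi1 {U : Set E4} (hU : IsOpen U)
    {ω1 ω2 ω3 φ ρ : E4 → V4} {a1 a2 K s1 s2 b1 b2 c1 c2 : E4 → ℝ}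
    (hω1 : ContDiffOn ℝ (⊤ : ℕ∞) ω1 U) (hω2 : ContDiffOn ℝ (⊤ : ℕ∞) ω2 U)
    (hω3 : ContDiffOn ℝ (⊤ : ℕ∞) ω3 U) (hφ : ContDiffOn ℝ (⊤ : ℕ∞) φ U)
    (ha1 : ContDiffOn ℝ (⊤ : ℕ∞) a1 U) (ha2 : ContDiffOn ℝ (⊤ : ℕ∞) a2 U)
    (hdω1 : ∀ x ∈ U, ∀ u v, d1 ω1 x u v =
      wedge φ ω2 x u v + wedge (fun y => a1 y • ω1 y + a2 y • ω2 y) ω3 x u v)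
    (hdω2 : ∀ x ∈ U, ∀ u v, d1 ω2 x u v =
      -wedge φ ω1 x u v + wedge (fun y => a2 y • ω1 y - a1 y • ω2 y) ω3 x u v)
    (hdω3 : ∀ x ∈ U, ∀ u v, d1 ω3 x u v = wedge ω1 ω2 x u v)
    (hdφ : ∀ x ∈ U, ∀ u v, d1 φ x u v = K x * wedge ω1 ω2 x u v + wedge ρ ω3 x u v)
    (hda1 : ∀ x ∈ U, fderiv ℝ a1 x =
      (2 * a2 x) • φ x + (s1 x + b2 x) • ω1 x + (s2 x + b1 x) • ω2 x + c1 x • ω3 x)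
    (hda2 : ∀ x ∈ U, fderiv ℝ a2 x =
      (-(2 * a1 x)) • φ x + (s2 x - b1 x) • ω1 x + (b2 x - s1 x) • ω2 x + c2 x • ω3 x)
    {y : E4} (hy : y ∈ U) {u v w : E4}
    (p1u : ω1 y u = 1) (p1v : ω1 y v = 0) (p1w : ω1 y w = 0)
    (p2u : ω2 y u = 0) (p2v : ω2 y v = 1) (p2w : ω2 y w = 0)
    (p3u : ω3 y u = 0) (p3v : ω3 y v = 0) (p3w : ω3 y w = 1)
    (p4u : φ y u = 0) (p4v : φ y v = 0) (p4w : φ y w = 0) :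
    ρ y u = -(2 * b1 y) := by
  have hUn : U ∈ nhds y := hU.mem_nhds hy
  have Dφ : DifferentiableAt ℝ φ y :=
    (diffOn_top hφ y hy).differentiableAt hUn
  have Dω1 : DifferentiableAt ℝ ω1 y :=
    (diffOn_top hω1 y hy).differentiableAt hUn
  have Dω2 : DifferentiableAt ℝ ω2 y :=
    (diffOn_top hω2 y hy).differentiableAt hUn
  have Dω3 : DifferentiableAt ℝ ω3 y :=
    (diffOn_top hω3 y hy).differentiableAt hUn
  have Da1 : DifferentiableAt ℝ a1 y :=
    (diffOn_top ha1 y hy).differentiableAt hUn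
  have Da2 : DifferentiableAt ℝ a2 y :=
    (diffOn_top ha2 y hy).differentiableAt hUn
  have heq : ∀ a b : E4, fderiv ℝ (fun t => d1 ω1 t a b) y
      = fderiv ℝ (fun t => wedge φ ω2 t a b
        + (a1 t * wedge ω1 ω3 t a b + a2 t * wedge ω2 ω3 t a b)) y := by
    intro a b
    apply Filter.EventuallyEq.fderiv_eq
    filter_upwards [hUn] with t ht
    rw [hdω1 t ht a b]
    simp only [wedge, ContinuousLinearMap.add_apply, ContinuousLinearMap.smul_apply,
      smul_eq_mul]
    ring
  have hexp : ∀ d a b : E4, fderiv ℝ (fun t => wedge φ ω2 t a b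
        + (a1 t * wedge ω1 ω3 t a b + a2 t * wedge ω2 ω3 t a b)) y d
      = (fderiv ℝ φ y d a * ω2 y b + φ y a * fderiv ℝ ω2 y d b
          - fderiv ℝ φ y d b * ω2 y a - φ y b * fderiv ℝ ω2 y d a)
        + ((fderiv ℝ a1 y d * wedge ω1 ω3 y a b
            + a1 y * (fderiv ℝ ω1 y d a * ω3 y b + ω1 y a * fderiv ℝ ω3 y d b
              - fderiv ℝ ω1 y d b * ω3 y a - ω1 y b * fderiv ℝ ω3 y d a))
          + (fderiv ℝ a2 y d * wedge ω2 ω3 y a b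
            + a2 y * (fderiv ℝ ω2 y d a * ω3 y b + ω2 y a * fderiv ℝ ω3 y d b
              - fderiv ℝ ω2 y d b * ω3 y a - ω2 y b * fderiv ℝ ω3 y d a))) := by
    intro d a b
    rw [fderiv_fun_add (diff_wedge Dφ Dω2 a b)
      ((Da1.fun_mul (diff_wedge Dω1 Dω3 a b)).fun_add (Da2.fun_mul (diff_wedge Dω2 Dω3 a b))),
      ContinuousLinearMap.add_apply,
      fderiv_fun_add (Da1.fun_mul (diff_wedge Dω1 Dω3 a b)) (Da2.fun_mul (diff_wedge Dω2 Dω3 a b)),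
      ContinuousLinearMap.add_apply,
      fd_wedge Dφ Dω2, fd_cwedge Da1 Dω1 Dω3, fd_cwedge Da2 Dω2 Dω3]
  have raw := d1_cyc (η := ω1)
    (Filter.eventually_of_mem hUn fun t ht =>
      (diffOn_top hω1 t ht).differentiableAt (hU.mem_nhds ht))
    ((diffOn_top (fderiv_smoothOn hU hω1) y hy).differentiableAt hUn)
    u v w
  rw [heq v w, heq w u, heq u v, hexp u v w, hexp v w u, hexp w u v] at raw
  simp only [wedge] at raw
  rw [p1u, p1v, p1w, p2u, p2v, p2w, p3u, p3v, p3w, p4u, p4v, p4w] at raw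
  have S1uv : fderiv ℝ ω1 y u v - fderiv ℝ ω1 y v u = 0 := by
    have := hdω1 y hy u v
    simp only [d1, wedge, ContinuousLinearMap.add_apply, ContinuousLinearMap.smul_apply,
      smul_eq_mul] at this
    rw [p1u, p1v, p2u, p2v, p3u, p3v, p4u, p4v] at this
    linarith [this]
  have S2uv : fderiv ℝ ω2 y u v - fderiv ℝ ω2 y v u = 0 := by
    have := hdω2 y hy u v
    simp only [d1, wedge, ContinuousLinearMap.add_apply, ContinuousLinearMap.sub_apply,
      ContinuousLinearMap.smul_apply, smul_eq_mul] at this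
    rw [p1u, p1v, p2u, p2v, p3u, p3v, p4u, p4v] at this
    linarith [this]
  have S3wv : fderiv ℝ ω3 y w v - fderiv ℝ ω3 y v w = 0 := by
    have := hdω3 y hy w v
    simp only [d1, wedge] at this
    rw [p1w, p1v, p2w, p2v] at this
    linarith [this]
  have S3uw : fderiv ℝ ω3 y u w - fderiv ℝ ω3 y w u = 0 := by
    have := hdω3 y hy u w
    simp only [d1, wedge] at this
    rw [p1u, p1w, p2u, p2w] at this
    linarith [this]
  have Sφwu : fderiv ℝ φ y w u - fderiv ℝ φ y u w = -(ρ y u) := by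
    have := hdφ y hy w u
    simp only [d1, wedge] at this
    rw [p1u, p1w, p2u, p2w, p3u, p3w] at this
    linarith [this]
  have A1v : fderiv ℝ a1 y v = s2 y + b1 y := by
    rw [hda1 y hy]
    simp only [ContinuousLinearMap.add_apply, ContinuousLinearMap.smul_apply, smul_eq_mul]
    rw [p1v, p2v, p3v, p4v]; ring
  have A2u : fderiv ℝ a2 y u = s2 y - b1 y := by
    rw [hda2 y hy]
    simp only [ContinuousLinearMap.add_apply, ContinuousLinearMap.smul_apply, smul_eq_mul]
    rw [p1u, p2u, p3u, p4u]; ring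
  linear_combination (-1 : ℝ) * raw + Sφwu + a1 y * S1uv + a1 y * S3wv
    + a2 y * S2uv + a2 y * S3uw - A1v + A2u

set_option maxHeartbeats 1000000 in
theorem bianchi2 {U : Set E4} (hU : IsOpen U)
    {ω1 ω2 ω3 φ ρ : E4 → V4} {a1 a2 K k1 k2 c3 : E4 → ℝ}
    (hω1 : ContDiffOn ℝ (⊤ : ℕ∞) ω1 U) (hω2 : ContDiffOn ℝ (⊤ : ℕ∞) ω2 U)
    (hω3 : ContDiffOn ℝ (⊤ : ℕ∞) ω3 U) (hφ : ContDiffOn ℝ (⊤ : ℕ∞) φ U)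
    (hρ : ContDiffOn ℝ (⊤ : ℕ∞) ρ U) (hK : ContDiffOn ℝ (⊤ : ℕ∞) K U)
    (hdω1 : ∀ x ∈ U, ∀ u v, d1 ω1 x u v =
      wedge φ ω2 x u v + wedge (fun y => a1 y • ω1 y + a2 y • ω2 y) ω3 x u v)
    (hdω2 : ∀ x ∈ U, ∀ u v, d1 ω2 x u v =
      -wedge φ ω1 x u v + wedge (fun y => a2 y • ω1 y - a1 y • ω2 y) ω3 x u v)
    (hdω3 : ∀ x ∈ U, ∀ u v, d1 ω3 x u v = wedge ω1 ω2 x u v)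
    (hdφ : ∀ x ∈ U, ∀ u v, d1 φ x u v = K x * wedge ω1 ω2 x u v + wedge ρ ω3 x u v)
    (hdK : ∀ x ∈ U, fderiv ℝ K x = k1 x • ω1 x + k2 x • ω2 x + c3 x • ω3 x)
    {y : E4} (hy : y ∈ U) {u v w : E4}
    (p1u : ω1 y u = 0) (p1v : ω1 y v = 1) (p1w : ω1 y w = 0)
    (p2u : ω2 y u = 0) (p2v : ω2 y v = 0) (p2w : ω2 y w = 1)
    (p3u : ω3 y u = 0) (p3v : ω3 y v = 0) (p3w : ω3 y w = 0)
    (p4u : φ y u = 1) (p4v : φ y v = 0) (p4w : φ y w = 0) :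
    ρ y u = 0 := by
  have hUn : U ∈ nhds y := hU.mem_nhds hy
  have Dφ : DifferentiableAt ℝ φ y := (diffOn_top hφ y hy).differentiableAt hUn
  have Dρ : DifferentiableAt ℝ ρ y := (diffOn_top hρ y hy).differentiableAt hUn
  have Dω1 : DifferentiableAt ℝ ω1 y := (diffOn_top hω1 y hy).differentiableAt hUn
  have Dω2 : DifferentiableAt ℝ ω2 y := (diffOn_top hω2 y hy).differentiableAt hUn
  have Dω3 : DifferentiableAt ℝ ω3 y := (diffOn_top hω3 y hy).differentiableAt hUn
  have DK : DifferentiableAt ℝ K y := (diffOn_top hK y hy).differentiableAt hUn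
  have heq : ∀ a b : E4, fderiv ℝ (fun t => d1 φ t a b) y
      = fderiv ℝ (fun t => K t * wedge ω1 ω2 t a b + wedge ρ ω3 t a b) y := by
    intro a b
    apply Filter.EventuallyEq.fderiv_eq
    filter_upwards [hUn] with t ht
    rw [hdφ t ht a b]
  have hexp : ∀ d a b : E4, fderiv ℝ (fun t => K t * wedge ω1 ω2 t a b
        + wedge ρ ω3 t a b) y d
      = (fderiv ℝ K y d * wedge ω1 ω2 y a b
          + K y * (fderiv ℝ ω1 y d a * ω2 y b + ω1 y a * fderiv ℝ ω2 y d b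
            - fderiv ℝ ω1 y d b * ω2 y a - ω1 y b * fderiv ℝ ω2 y d a))
        + (fderiv ℝ ρ y d a * ω3 y b + ρ y a * fderiv ℝ ω3 y d b
            - fderiv ℝ ρ y d b * ω3 y a - ρ y b * fderiv ℝ ω3 y d a) := by
    intro d a b
    rw [fderiv_fun_add (DK.fun_mul (diff_wedge Dω1 Dω2 a b)) (diff_wedge Dρ Dω3 a b),
      ContinuousLinearMap.add_apply, fd_cwedge DK Dω1 Dω2, fd_wedge Dρ Dω3]
  have raw := d1_cyc (η := φ)
    (Filter.eventually_of_mem hUn fun t ht =>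
      (diffOn_top hφ t ht).differentiableAt (hU.mem_nhds ht))
    ((diffOn_top (fderiv_smoothOn hU hφ) y hy).differentiableAt hUn)
    u v w
  rw [heq v w, heq w u, heq u v, hexp u v w, hexp v w u, hexp w u v] at raw
  simp only [wedge] at raw
  rw [p1u, p1v, p1w, p2u, p2v, p2w, p3u, p3v, p3w] at raw
  have S1uv : fderiv ℝ ω1 y u v - fderiv ℝ ω1 y v u = 0 := by
    have := hdω1 y hy u v
    simp only [d1, wedge, ContinuousLinearMap.add_apply, ContinuousLinearMap.smul_apply,
      smul_eq_mul] at this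
    rw [p1u, p1v, p2u, p2v, p3u, p3v, p4u, p4v] at this
    linarith [this]
  have S2uw : fderiv ℝ ω2 y u w - fderiv ℝ ω2 y w u = 0 := by
    have := hdω2 y hy u w
    simp only [d1, wedge, ContinuousLinearMap.add_apply, ContinuousLinearMap.sub_apply,
      ContinuousLinearMap.smul_apply, smul_eq_mul] at this
    rw [p1u, p1w, p2u, p2w, p3u, p3w, p4u, p4w] at this
    linarith [this]
  have S3wv : fderiv ℝ ω3 y w v - fderiv ℝ ω3 y v w = -1 := by
    have := hdω3 y hy w v
    simp only [d1, wedge] at this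
    rw [p1w, p1v, p2w, p2v] at this
    linarith [this]
  have S3uw : fderiv ℝ ω3 y u w - fderiv ℝ ω3 y w u = 0 := by
    have := hdω3 y hy u w
    simp only [d1, wedge] at this
    rw [p1u, p1w, p2u, p2w] at this
    linarith [this]
  have S3vu : fderiv ℝ ω3 y v u - fderiv ℝ ω3 y u v = 0 := by
    have := hdω3 y hy v u
    simp only [d1, wedge] at this
    rw [p1u, p1v, p2u, p2v] at this
    linarith [this]
  have AKu : fderiv ℝ K y u = 0 := by
    rw [hdK y hy]
    simp only [ContinuousLinearMap.add_apply, ContinuousLinearMap.smul_apply, smul_eq_mul]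
    rw [p1u, p2u, p3u]; ring
  linear_combination (-1 : ℝ) * raw + AKu + K y * S1uv + K y * S2uw
    + ρ y u * S3wv + ρ y v * S3uw + ρ y w * S3vu

set_option maxHeartbeats 4000000 in
/-- The coframe (10) adapted from the Griffiths geodesic system of a sub-Riemannian
metric on a 3-dimensional contact manifold is a section of the reduced bundle `B₁`:
the variational Fels structure equations hold with `T₂ = 0`, `T₃ = 3/5`, `T₄ = −1`. -/
theorem subriemannian_geodesics_are_variational
    (U : Set (Fin 4 → ℝ)) (hU : IsOpen U)
    (ω1 ω2 ω3 φ ρ : (Fin 4 → ℝ) → ((Fin 4 → ℝ) →L[ℝ] ℝ))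
    (a1 a2 K s1 s2 b1 b2 k1 k2 c1 c2 c3 : (Fin 4 → ℝ) → ℝ)
    (hω1 : ContDiffOn ℝ (⊤ : ℕ∞) ω1 U) (hω2 : ContDiffOn ℝ (⊤ : ℕ∞) ω2 U)
    (hω3 : ContDiffOn ℝ (⊤ : ℕ∞) ω3 U) (hφ : ContDiffOn ℝ (⊤ : ℕ∞) φ U)
    (hρ : ContDiffOn ℝ (⊤ : ℕ∞) ρ U)
    (ha1 : ContDiffOn ℝ (⊤ : ℕ∞) a1 U) (ha2 : ContDiffOn ℝ (⊤ : ℕ∞) a2 U)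
    (hK : ContDiffOn ℝ (⊤ : ℕ∞) K U)
    (hs1 : ContDiffOn ℝ (⊤ : ℕ∞) s1 U) (hs2 : ContDiffOn ℝ (⊤ : ℕ∞) s2 U)
    (hb1 : ContDiffOn ℝ (⊤ : ℕ∞) b1 U) (hb2 : ContDiffOn ℝ (⊤ : ℕ∞) b2 U)
    (hk1 : ContDiffOn ℝ (⊤ : ℕ∞) k1 U) (hk2 : ContDiffOn ℝ (⊤ : ℕ∞) k2 U)
    (hc1 : ContDiffOn ℝ (⊤ : ℕ∞) c1 U) (hc2 : ContDiffOn ℝ (⊤ : ℕ∞) c2 U)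
    (hc3 : ContDiffOn ℝ (⊤ : ℕ∞) c3 U)
    (hli : ∀ x ∈ U, LinearIndependent ℝ ![ω1 x, ω2 x, ω3 x, φ x])
    (hdω1 : ∀ x ∈ U, ∀ u v, d1 ω1 x u v =
      wedge φ ω2 x u v + wedge (fun y => a1 y • ω1 y + a2 y • ω2 y) ω3 x u v)
    (hdω2 : ∀ x ∈ U, ∀ u v, d1 ω2 x u v =
      -wedge φ ω1 x u v + wedge (fun y => a2 y • ω1 y - a1 y • ω2 y) ω3 x u v)
    (hdω3 : ∀ x ∈ U, ∀ u v, d1 ω3 x u v = wedge ω1 ω2 x u v)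
    (hdφ : ∀ x ∈ U, ∀ u v, d1 φ x u v = K x * wedge ω1 ω2 x u v + wedge ρ ω3 x u v)
    (hda1 : ∀ x ∈ U, fderiv ℝ a1 x =
      (2 * a2 x) • φ x + (s1 x + b2 x) • ω1 x + (s2 x + b1 x) • ω2 x + c1 x • ω3 x)
    (hda2 : ∀ x ∈ U, fderiv ℝ a2 x =
      (-(2 * a1 x)) • φ x + (s2 x - b1 x) • ω1 x + (b2 x - s1 x) • ω2 x + c2 x • ω3 x)
    (hdK : ∀ x ∈ U, fderiv ℝ K x = k1 x • ω1 x + k2 x • ω2 x + c3 x • ω3 x) :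
    ∃ α β γ : Z → (Z →L[ℝ] ℝ), ∃ I0 T1 T6 T7 : Z → ℝ,
      ContDiffOn ℝ (⊤ : ℕ∞) α (U ×ˢ (Set.univ : Set ℝ)) ∧
      ContDiffOn ℝ (⊤ : ℕ∞) β (U ×ˢ (Set.univ : Set ℝ)) ∧
      ContDiffOn ℝ (⊤ : ℕ∞) γ (U ×ˢ (Set.univ : Set ℝ)) ∧
      ContDiffOn ℝ (⊤ : ℕ∞) I0 (U ×ˢ (Set.univ : Set ℝ)) ∧
      ContDiffOn ℝ (⊤ : ℕ∞) T1 (U ×ˢ (Set.univ : Set ℝ)) ∧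
      ContDiffOn ℝ (⊤ : ℕ∞) T6 (U ×ˢ (Set.univ : Set ℝ)) ∧
      ContDiffOn ℝ (⊤ : ℕ∞) T7 (U ×ˢ (Set.univ : Set ℝ)) ∧
      (∀ z ∈ U ×ˢ (Set.univ : Set ℝ), ∀ u v : Z,
        d1 (σZ ω1 ω3) z u v =
          wedge α (σZ ω1 ω3) z u v
          + wedge (θ₀Z ω3)
              (fun w => T1 w • θ₁Z ω2 w + (0 : ℝ) • θ₂Z φ ω1 ω3 a2 K w
                + (3 / 5 : ℝ) • θ₃Z ω1 ω2 ω3 a1 a2 K s2 k1 b1 w) z u v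
          + (-1 : ℝ) * wedge (θ₁Z ω2) (θ₂Z φ ω1 ω3 a2 K) z u v) ∧
      (∀ z ∈ U ×ˢ (Set.univ : Set ℝ), ∀ u v : Z,
        d1 (θ₀Z ω3) z u v = wedge β (θ₀Z ω3) z u v + wedge (σZ ω1 ω3) (θ₁Z ω2) z u v) ∧
      (∀ z ∈ U ×ˢ (Set.univ : Set ℝ), ∀ u v : Z,
        d1 (θ₁Z ω2) z u v =
          wedge (fun w => β w - α w) (θ₁Z ω2) z u v + wedge γ (θ₀Z ω3) z u v
          + wedge (σZ ω1 ω3) (θ₂Z φ ω1 ω3 a2 K) z u v) ∧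
      (∀ z ∈ U ×ˢ (Set.univ : Set ℝ), ∀ u v : Z,
        d1 (θ₂Z φ ω1 ω3 a2 K) z u v =
          wedge (fun w => β w - (2 : ℝ) • α w) (θ₂Z φ ω1 ω3 a2 K) z u v
          + (4 / 3) * wedge γ (θ₁Z ω2) z u v
          + wedge (σZ ω1 ω3) (θ₃Z ω1 ω2 ω3 a1 a2 K s2 k1 b1) z u v) ∧
      (∀ z ∈ U ×ˢ (Set.univ : Set ℝ), ∀ u v : Z,
        d1 (θ₃Z ω1 ω2 ω3 a1 a2 K s2 k1 b1) z u v =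
          wedge (fun w => β w - (3 : ℝ) • α w) (θ₃Z ω1 ω2 ω3 a1 a2 K s2 k1 b1) z u v
          + wedge γ (θ₂Z φ ω1 ω3 a2 K) z u v
          + I0 z * wedge (σZ ω1 ω3) (θ₀Z ω3) z u v
          + T6 z * wedge (θ₀Z ω3) (θ₁Z ω2) z u v
          + T7 z * wedge (θ₀Z ω3) (θ₂Z φ ω1 ω3 a2 K) z u v) := by
  classical
  -- differentiability of the data at points of U
  have hUn : ∀ y, y ∈ U → U ∈ nhds y := fun y hy => hU.mem_nhds hy
  have Dω1 : ∀ y ∈ U, DifferentiableAt ℝ ω1 y :=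
    fun y hy => (diffOn_top hω1 y hy).differentiableAt (hUn y hy)
  have Dω2 : ∀ y ∈ U, DifferentiableAt ℝ ω2 y :=
    fun y hy => (diffOn_top hω2 y hy).differentiableAt (hUn y hy)
  have Dω3 : ∀ y ∈ U, DifferentiableAt ℝ ω3 y :=
    fun y hy => (diffOn_top hω3 y hy).differentiableAt (hUn y hy)
  have Dφ : ∀ y ∈ U, DifferentiableAt ℝ φ y :=
    fun y hy => (diffOn_top hφ y hy).differentiableAt (hUn y hy)
  have Da1 : ∀ y ∈ U, DifferentiableAt ℝ a1 y :=
    fun y hy => (diffOn_top ha1 y hy).differentiableAt (hUn y hy)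
  have Da2 : ∀ y ∈ U, DifferentiableAt ℝ a2 y :=
    fun y hy => (diffOn_top ha2 y hy).differentiableAt (hUn y hy)
  have DK : ∀ y ∈ U, DifferentiableAt ℝ K y :=
    fun y hy => (diffOn_top hK y hy).differentiableAt (hUn y hy)
  have Ds2 : ∀ y ∈ U, DifferentiableAt ℝ s2 y :=
    fun y hy => (diffOn_top hs2 y hy).differentiableAt (hUn y hy)
  have Dk1 : ∀ y ∈ U, DifferentiableAt ℝ k1 y :=
    fun y hy => (diffOn_top hk1 y hy).differentiableAt (hUn y hy)
  have Db1 : ∀ y ∈ U, DifferentiableAt ℝ b1 y :=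
    fun y hy => (diffOn_top hb1 y hy).differentiableAt (hUn y hy)
  -- the coframe as a family
  have hcfS : ∀ i : Fin 4, ContDiffOn ℝ (⊤ : ℕ∞) (fun x => cf ω1 ω2 ω3 φ x i) U := by
    intro i
    fin_cases i
    · simpa [cf] using hω1
    · simpa [cf] using hω2
    · simpa [cf] using hω3
    · simpa [cf] using hφ
  have hliC : ∀ x ∈ U, LinearIndependent ℝ (cf ω1 ω2 ω3 φ x) := hli
  have hP : ∀ y ∈ U, ∀ i j : Fin 4,
      cf ω1 ω2 ω3 φ y j (frameV (cf ω1 ω2 ω3 φ y) i) = if i = j then 1 else 0 :=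
    fun y hy i j => frameV_pair (hli y hy) i j
  -- Bianchi identities give the first and last components of ρ
  have hρdec : ∀ y ∈ U, ∀ vv : E4, ρ y vv
      = -(2 * b1 y) * ω1 y vv + cmpF ω1 ω2 ω3 φ ρ 1 y * ω2 y vv
        + cmpF ω1 ω2 ω3 φ ρ 2 y * ω3 y vv := by
    intro y hy vv
    have hr1 : ρ y (frameV (cf ω1 ω2 ω3 φ y) 0) = -(2 * b1 y) :=
      bianchi1 hU hω1 hω2 hω3 hφ ha1 ha2 hdω1 hdω2 hdω3 hdφ hda1 hda2 hy
        (by simpa [cf] using hP y hy 0 0) (by simpa [cf] using hP y hy 1 0)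
        (by simpa [cf] using hP y hy 2 0) (by simpa [cf] using hP y hy 0 1)
        (by simpa [cf] using hP y hy 1 1) (by simpa [cf] using hP y hy 2 1)
        (by simpa [cf] using hP y hy 0 2) (by simpa [cf] using hP y hy 1 2)
        (by simpa [cf] using hP y hy 2 2) (by simpa [cf] using hP y hy 0 3)
        (by simpa [cf] using hP y hy 1 3) (by simpa [cf] using hP y hy 2 3)
    have hr4 : ρ y (frameV (cf ω1 ω2 ω3 φ y) 3) = 0 :=
      bianchi2 hU hω1 hω2 hω3 hφ hρ hK hdω1 hdω2 hdω3 hdφ hdK hy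
        (by simpa [cf] using hP y hy 3 0) (by simpa [cf] using hP y hy 0 0)
        (by simpa [cf] using hP y hy 1 0) (by simpa [cf] using hP y hy 3 1)
        (by simpa [cf] using hP y hy 0 1) (by simpa [cf] using hP y hy 1 1)
        (by simpa [cf] using hP y hy 3 2) (by simpa [cf] using hP y hy 0 2)
        (by simpa [cf] using hP y hy 1 2) (by simpa [cf] using hP y hy 3 3)
        (by simpa [cf] using hP y hy 0 3) (by simpa [cf] using hP y hy 1 3)
    have hd := clm_decomp (hli y hy) (ρ y) vv
    rw [Fin.sum_univ_four] at hd
    simp only [cf, Matrix.cons_val_zero, Matrix.cons_val_one, Matrix.head_cons, Matrix.cons_val_two, Matrix.tail_cons, Matrix.cons_val_three, Matrix.head_fin_const] at hr1 hr4 hd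
    simp only [cmpF, cf, Matrix.cons_val_zero, Matrix.cons_val_one, Matrix.head_cons, Matrix.cons_val_two, Matrix.tail_cons, Matrix.cons_val_three, Matrix.head_fin_const]
    linear_combination hd + (ω1 y vv) * hr1 + (φ y vv) * hr4
  have hμdec : ∀ y ∈ U, ∀ vv : E4,
      1/10 * (fderiv ℝ s2 y vv - 3 * fderiv ℝ k1 y vv - 21 * fderiv ℝ b1 y vv)
      = cmpF ω1 ω2 ω3 φ (muC s2 k1 b1) 0 y * ω1 y vv
        + cmpF ω1 ω2 ω3 φ (muC s2 k1 b1) 1 y * ω2 y vv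
        + cmpF ω1 ω2 ω3 φ (muC s2 k1 b1) 2 y * ω3 y vv
        + cmpF ω1 ω2 ω3 φ (muC s2 k1 b1) 3 y * φ y vv := by
    intro y hy vv
    have hd := clm_decomp (hli y hy) (muC s2 k1 b1 y) vv
    rw [Fin.sum_univ_four] at hd
    have he : muC s2 k1 b1 y vv
        = 1/10 * (fderiv ℝ s2 y vv - 3 * fderiv ℝ k1 y vv - 21 * fderiv ℝ b1 y vv) := by
      simp only [muC, ContinuousLinearMap.smul_apply, ContinuousLinearMap.sub_apply,
        smul_eq_mul]
    rw [he] at hd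
    simp only [cf, Matrix.cons_val_zero, Matrix.cons_val_one, Matrix.head_cons, Matrix.cons_val_two, Matrix.tail_cons, Matrix.cons_val_three, Matrix.head_fin_const] at hd
    simp only [cmpF, cf, Matrix.cons_val_zero, Matrix.cons_val_one, Matrix.head_cons, Matrix.cons_val_two, Matrix.tail_cons, Matrix.cons_val_three, Matrix.head_fin_const]
    linear_combination hd
  -- derivatives of the coefficient functions on Z
  have hsndD : ∀ z : Z, DifferentiableAt ℝ (fun w : Z => w.2) z :=
    fun z => (hasFDerivAt_snd (p := z)).differentiableAt
  have hsndv : ∀ z u : Z, fderiv ℝ (fun w : Z => w.2) z u = u.2 := by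
    intro z u
    have h2 : fderiv ℝ (fun w : Z => w.2) z = ContinuousLinearMap.snd ℝ E4 ℝ :=
      (hasFDerivAt_snd (p := z)).fderiv
    rw [h2]; rfl
  have h35D : ∀ z : Z, DifferentiableAt ℝ (fun w : Z => 3 / 5 * w.2) z :=
    fun z => ((hasFDerivAt_snd (p := z)).const_mul (3/5)).differentiableAt
  have h35v : ∀ z u : Z, fderiv ℝ (fun w : Z => 3 / 5 * w.2) z u = 3 / 5 * u.2 := by
    intro z u
    have h2 : fderiv ℝ (fun w : Z => 3 / 5 * w.2) z
        = (3/5 : ℝ) • ContinuousLinearMap.snd ℝ E4 ℝ :=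
      ((hasFDerivAt_snd (p := z)).const_mul (3/5)).fderiv
    rw [h2]; simp
  have hfstD : ∀ (g : E4 → ℝ), ∀ z : Z, z.1 ∈ U → DifferentiableAt ℝ g z.1 →
      DifferentiableAt ℝ (fun w : Z => g w.1) z :=
    fun g z _ hg => hg.comp z differentiableAt_fst
  have hfstv : ∀ (g : E4 → ℝ), ∀ z : Z, DifferentiableAt ℝ g z.1 →
      ∀ u : Z, fderiv ℝ (fun w : Z => g w.1) z u = fderiv ℝ g z.1 u.1 := by
    intro g z hg u
    have h2 : fderiv ℝ (fun w : Z => g w.1) z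
        = (fderiv ℝ g z.1).comp (ContinuousLinearMap.fst ℝ E4 ℝ) :=
      (hg.hasFDerivAt.comp z hasFDerivAt_fst).fderiv
    rw [h2]; rfl
  have hAfD : ∀ z : Z, z.1 ∈ U → HasFDerivAt (Afun a2 K)
      ((1/10 : ℝ) • (((fderiv ℝ a2 z.1).comp (ContinuousLinearMap.fst ℝ E4 ℝ)
        + (3 : ℝ) • ((2 * z.2) • ContinuousLinearMap.snd ℝ E4 ℝ))
        - (3 : ℝ) • ((fderiv ℝ K z.1).comp (ContinuousLinearMap.fst ℝ E4 ℝ)))) z := by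
    intro z hz1
    have h1 : HasFDerivAt (fun w : Z => a2 w.1)
        ((fderiv ℝ a2 z.1).comp (ContinuousLinearMap.fst ℝ E4 ℝ)) z :=
      (Da2 z.1 hz1).hasFDerivAt.comp z hasFDerivAt_fst
    have h2 : HasFDerivAt (fun w : Z => w.2 ^ 2)
        ((2 * z.2) • ContinuousLinearMap.snd ℝ E4 ℝ) z := by
      have hs : HasFDerivAt (fun w : Z => w.2) (ContinuousLinearMap.snd ℝ E4 ℝ) z :=
        hasFDerivAt_snd
      have h := hs.mul hs
      rw [show (fun w : Z => w.2 ^ 2) = (fun w : Z => w.2 * w.2) from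
        funext fun w => by ring, two_mul, add_smul]
      exact h
    have h3 : HasFDerivAt (fun w : Z => K w.1)
        ((fderiv ℝ K z.1).comp (ContinuousLinearMap.fst ℝ E4 ℝ)) z :=
      (DK z.1 hz1).hasFDerivAt.comp z hasFDerivAt_fst
    exact ((h1.add (h2.const_mul 3)).sub (h3.const_mul 3)).const_mul (1/10)
  have hAfv : ∀ z : Z, z.1 ∈ U → ∀ u : Z, fderiv ℝ (Afun a2 K) z u
      = 1/10 * (fderiv ℝ a2 z.1 u.1 + 6 * z.2 * u.2 - 3 * fderiv ℝ K z.1 u.1) := by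
    intro z hz1 u
    rw [(hAfD z hz1).fderiv]
    simp only [ContinuousLinearMap.smul_apply, ContinuousLinearMap.sub_apply,
      ContinuousLinearMap.add_apply, ContinuousLinearMap.coe_comp', Function.comp_apply,
      ContinuousLinearMap.coe_fst', ContinuousLinearMap.coe_snd', smul_eq_mul]
    ring
  have hBfD : ∀ z : Z, z.1 ∈ U → HasFDerivAt (Bfun a1 s2 k1 b1)
      ((1/10 : ℝ) • ((((fderiv ℝ s2 z.1).comp (ContinuousLinearMap.fst ℝ E4 ℝ)
        - (3 : ℝ) • ((fderiv ℝ k1 z.1).comp (ContinuousLinearMap.fst ℝ E4 ℝ)))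
        - ((6 * a1 z.1) • ContinuousLinearMap.snd ℝ E4 ℝ
          + z.2 • ((6 : ℝ) • ((fderiv ℝ a1 z.1).comp (ContinuousLinearMap.fst ℝ E4 ℝ)))))
        - (21 : ℝ) • ((fderiv ℝ b1 z.1).comp (ContinuousLinearMap.fst ℝ E4 ℝ)))) z := by
    intro z hz1
    have h1 : HasFDerivAt (fun w : Z => s2 w.1)
        ((fderiv ℝ s2 z.1).comp (ContinuousLinearMap.fst ℝ E4 ℝ)) z :=
      (Ds2 z.1 hz1).hasFDerivAt.comp z hasFDerivAt_fst
    have h2 : HasFDerivAt (fun w : Z => k1 w.1)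
        ((fderiv ℝ k1 z.1).comp (ContinuousLinearMap.fst ℝ E4 ℝ)) z :=
      (Dk1 z.1 hz1).hasFDerivAt.comp z hasFDerivAt_fst
    have h3 : HasFDerivAt (fun w : Z => b1 w.1)
        ((fderiv ℝ b1 z.1).comp (ContinuousLinearMap.fst ℝ E4 ℝ)) z :=
      (Db1 z.1 hz1).hasFDerivAt.comp z hasFDerivAt_fst
    have h4 : HasFDerivAt (fun w : Z => a1 w.1)
        ((fderiv ℝ a1 z.1).comp (ContinuousLinearMap.fst ℝ E4 ℝ)) z :=
      (Da1 z.1 hz1).hasFDerivAt.comp z hasFDerivAt_fst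
    have h5 : HasFDerivAt (fun w : Z => 6 * a1 w.1 * w.2)
        ((6 * a1 z.1) • ContinuousLinearMap.snd ℝ E4 ℝ
          + z.2 • ((6 : ℝ) • ((fderiv ℝ a1 z.1).comp (ContinuousLinearMap.fst ℝ E4 ℝ)))) z :=
      (h4.const_mul 6).mul (hasFDerivAt_snd (p := z)) 
    exact (((h1.sub (h2.const_mul 3)).sub h5).sub (h3.const_mul 21)).const_mul (1/10)
  have hBfv : ∀ z : Z, z.1 ∈ U → ∀ u : Z, fderiv ℝ (Bfun a1 s2 k1 b1) z u
      = 1/10 * (fderiv ℝ s2 z.1 u.1 - 3 * fderiv ℝ k1 z.1 u.1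
        - (6 * a1 z.1 * u.2 + 6 * z.2 * fderiv ℝ a1 z.1 u.1) - 21 * fderiv ℝ b1 z.1 u.1) := by
    intro z hz1 u
    rw [(hBfD z hz1).fderiv]
    simp only [ContinuousLinearMap.smul_apply, ContinuousLinearMap.sub_apply,
      ContinuousLinearMap.add_apply, ContinuousLinearMap.coe_comp', Function.comp_apply,
      ContinuousLinearMap.coe_fst', ContinuousLinearMap.coe_snd', smul_eq_mul]
    ring
  -- exterior derivatives of the coframe on Z
  have hdσL : ∀ z : Z, z.1 ∈ U → ∀ u v : Z, d1 (σZ ω1 ω3) z u v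
      = d1 ω1 z.1 u.1 v.1 - (3/5 * u.2 * ω3 z.1 v.1 - 3/5 * v.2 * ω3 z.1 u.1
        + 3/5 * z.2 * d1 ω3 z.1 u.1 v.1) := by
    intro z hz1 u v
    have e : σZ ω1 ω3 = fun w => pb ω1 w - (fun w : Z => 3 / 5 * w.2) w • pb ω3 w := rfl
    rw [e, d1_sub (diff_pb (Dω1 z.1 hz1)) ((h35D z).fun_smul (diff_pb (Dω3 z.1 hz1))),
      d1_smul (h35D z) (diff_pb (Dω3 z.1 hz1)), d1_pb (Dω1 z.1 hz1),
      d1_pb (Dω3 z.1 hz1), h35v, h35v]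
    simp only [pb, ContinuousLinearMap.coe_comp', Function.comp_apply,
      ContinuousLinearMap.coe_fst']
  have hdθ0L : ∀ z : Z, z.1 ∈ U → ∀ u v : Z, d1 (θ₀Z ω3) z u v = d1 ω3 z.1 u.1 v.1 :=
    fun z hz1 u v => d1_pb (Dω3 z.1 hz1) u v
  have hdθ1L : ∀ z : Z, z.1 ∈ U → ∀ u v : Z, d1 (θ₁Z ω2) z u v = d1 ω2 z.1 u.1 v.1 :=
    fun z hz1 u v => d1_pb (Dω2 z.1 hz1) u v
  have hdθ2L : ∀ z : Z, z.1 ∈ U → ∀ u v : Z, d1 (θ₂Z φ ω1 ω3 a2 K) z u v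
      = d1 φ z.1 u.1 v.1
        - (u.2 * ω1 z.1 v.1 - v.2 * ω1 z.1 u.1 + z.2 * d1 ω1 z.1 u.1 v.1)
        + (1/10 * (fderiv ℝ a2 z.1 u.1 + 6 * z.2 * u.2 - 3 * fderiv ℝ K z.1 u.1) * ω3 z.1 v.1
          - 1/10 * (fderiv ℝ a2 z.1 v.1 + 6 * z.2 * v.2 - 3 * fderiv ℝ K z.1 v.1) * ω3 z.1 u.1
          + Afun a2 K z * d1 ω3 z.1 u.1 v.1) := by
    intro z hz1 u v
    have e : θ₂Z φ ω1 ω3 a2 K = fun w =>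
        (pb φ w - (fun w : Z => w.2) w • pb ω1 w) + Afun a2 K w • pb ω3 w := rfl
    have d1' : DifferentiableAt ℝ (fun w : Z => pb φ w - (fun w : Z => w.2) w • pb ω1 w) z :=
      (diff_pb (Dφ z.1 hz1)).sub ((hsndD z).smul (diff_pb (Dω1 z.1 hz1)))
    have d2' : DifferentiableAt ℝ (fun w : Z => Afun a2 K w • pb ω3 w) z :=
      (hAfD z hz1).differentiableAt.smul (diff_pb (Dω3 z.1 hz1))
    rw [e, d1_add d1' d2',
      d1_sub (diff_pb (Dφ z.1 hz1)) ((hsndD z).fun_smul (diff_pb (Dω1 z.1 hz1))),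
      d1_smul (hsndD z) (diff_pb (Dω1 z.1 hz1)),
      d1_smul (hAfD z hz1).differentiableAt (diff_pb (Dω3 z.1 hz1)),
      d1_pb (Dφ z.1 hz1), d1_pb (Dω1 z.1 hz1), d1_pb (Dω3 z.1 hz1),
      hsndv, hsndv, hAfv z hz1, hAfv z hz1]
    simp only [pb, ContinuousLinearMap.coe_comp', Function.comp_apply,
      ContinuousLinearMap.coe_fst']
  have hdθ3L : ∀ z : Z, z.1 ∈ U → ∀ u v : Z, d1 (θ₃Z ω1 ω2 ω3 a1 a2 K s2 k1 b1) z u v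
      = -(fderiv ℝ a1 z.1 u.1 * ω1 z.1 v.1 - fderiv ℝ a1 z.1 v.1 * ω1 z.1 u.1
          + a1 z.1 * d1 ω1 z.1 u.1 v.1)
        - ((fderiv ℝ a2 z.1 u.1
              + 1/10 * (fderiv ℝ a2 z.1 u.1 + 6 * z.2 * u.2 - 3 * fderiv ℝ K z.1 u.1))
                * ω2 z.1 v.1
            - (fderiv ℝ a2 z.1 v.1
              + 1/10 * (fderiv ℝ a2 z.1 v.1 + 6 * z.2 * v.2 - 3 * fderiv ℝ K z.1 v.1))
                * ω2 z.1 u.1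
            + (a2 z.1 + Afun a2 K z) * d1 ω2 z.1 u.1 v.1)
        + (1/10 * (fderiv ℝ s2 z.1 u.1 - 3 * fderiv ℝ k1 z.1 u.1
              - (6 * a1 z.1 * u.2 + 6 * z.2 * fderiv ℝ a1 z.1 u.1)
              - 21 * fderiv ℝ b1 z.1 u.1) * ω3 z.1 v.1
          - 1/10 * (fderiv ℝ s2 z.1 v.1 - 3 * fderiv ℝ k1 z.1 v.1
              - (6 * a1 z.1 * v.2 + 6 * z.2 * fderiv ℝ a1 z.1 v.1)
              - 21 * fderiv ℝ b1 z.1 v.1) * ω3 z.1 u.1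
          + Bfun a1 s2 k1 b1 z * d1 ω3 z.1 u.1 v.1) := by
    intro z hz1 u v
    have e : θ₃Z ω1 ω2 ω3 a1 a2 K s2 k1 b1 = fun w =>
        (((fun _ : Z => dxZ) w - (fun w : Z => a1 w.1) w • pb ω1 w)
          - (fun w : Z => a2 w.1 + Afun a2 K w) w • pb ω2 w)
          + Bfun a1 s2 k1 b1 w • pb ω3 w := rfl
    have da1' : DifferentiableAt ℝ (fun w : Z => a1 w.1) z :=
      hfstD a1 z hz1 (Da1 z.1 hz1)
    have da2A : DifferentiableAt ℝ (fun w : Z => a2 w.1 + Afun a2 K w) z :=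
      (hfstD a2 z hz1 (Da2 z.1 hz1)).add (hAfD z hz1).differentiableAt
    have dd1 : DifferentiableAt ℝ (fun _ : Z => dxZ) z := differentiableAt_const _
    have dd2 : DifferentiableAt ℝ (fun w : Z => (fun w : Z => a1 w.1) w • pb ω1 w) z :=
      da1'.smul (diff_pb (Dω1 z.1 hz1))
    have dd3 : DifferentiableAt ℝ
        (fun w : Z => (fun w : Z => a2 w.1 + Afun a2 K w) w • pb ω2 w) z :=
      da2A.smul (diff_pb (Dω2 z.1 hz1))
    have dd4 : DifferentiableAt ℝ (fun w : Z => Bfun a1 s2 k1 b1 w • pb ω3 w) z :=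
      (hBfD z hz1).differentiableAt.smul (diff_pb (Dω3 z.1 hz1))
    have hA2v : ∀ u : Z, fderiv ℝ (fun w : Z => a2 w.1 + Afun a2 K w) z u
        = fderiv ℝ a2 z.1 u.1
          + 1/10 * (fderiv ℝ a2 z.1 u.1 + 6 * z.2 * u.2 - 3 * fderiv ℝ K z.1 u.1) := by
      intro u
      rw [fderiv_fun_add (hfstD a2 z hz1 (Da2 z.1 hz1)) (hAfD z hz1).differentiableAt]
      rw [ContinuousLinearMap.add_apply, hfstv a2 z (Da2 z.1 hz1), hAfv z hz1]
    rw [e, d1_add ((dd1.fun_sub dd2).fun_sub dd3) dd4, d1_sub (dd1.fun_sub dd2) dd3,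
      d1_sub dd1 dd2, d1_constZ, d1_smul da1' (diff_pb (Dω1 z.1 hz1)),
      d1_smul da2A (diff_pb (Dω2 z.1 hz1)),
      d1_smul (hBfD z hz1).differentiableAt (diff_pb (Dω3 z.1 hz1)),
      d1_pb (Dω1 z.1 hz1), d1_pb (Dω2 z.1 hz1), d1_pb (Dω3 z.1 hz1),
      hfstv a1 z (Da1 z.1 hz1), hfstv a1 z (Da1 z.1 hz1),
      hA2v, hA2v, hBfv z hz1, hBfv z hz1]
    simp only [pb, ContinuousLinearMap.coe_comp', Function.comp_apply,
      ContinuousLinearMap.coe_fst']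
    ring
  -- smoothness helpers on Z
  have hSf : ∀ (f : E4 → ℝ), ContDiffOn ℝ (⊤ : ℕ∞) f U →
      ContDiffOn ℝ (⊤ : ℕ∞) (fun z : Z => f z.1) (U ×ˢ (Set.univ : Set ℝ)) :=
    fun f hf => hf.comp contDiff_fst.contDiffOn fun z hz => hz.1
  have hSsnd : ContDiffOn ℝ (⊤ : ℕ∞) (fun z : Z => z.2) (U ×ˢ (Set.univ : Set ℝ)) :=
    contDiff_snd.contDiffOn
  have hSpb : ∀ (η : E4 → V4), ContDiffOn ℝ (⊤ : ℕ∞) η U →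
      ContDiffOn ℝ (⊤ : ℕ∞) (fun z : Z => pb η z) (U ×ˢ (Set.univ : Set ℝ)) := by
    intro η hη
    have e : (fun z : Z => pb η z) = fun z : Z =>
        ((ContinuousLinearMap.compL ℝ Z E4 ℝ).flip (ContinuousLinearMap.fst ℝ E4 ℝ))
          (η z.1) := rfl
    rw [e]
    exact (ContinuousLinearMap.contDiff _).comp_contDiffOn
      (hη.comp contDiff_fst.contDiffOn fun z hz => hz.1)
  have hfrS : ∀ i, ContDiffOn ℝ (⊤ : ℕ∞) (fun x => frameV (cf ω1 ω2 ω3 φ x) i) U :=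
    frameV_smooth hU hcfS hliC
  have hcmpS : ∀ (η : E4 → V4), ContDiffOn ℝ (⊤ : ℕ∞) η U → ∀ i,
      ContDiffOn ℝ (⊤ : ℕ∞) (cmpF ω1 ω2 ω3 φ η i) U :=
    fun η hη i => hη.clm_apply (hfrS i)
  have hμS : ContDiffOn ℝ (⊤ : ℕ∞) (muC s2 k1 b1) U :=
    ContDiffOn.const_smul _ (((fderiv_smoothOn hU hs2).sub
      (ContDiffOn.const_smul _ (fderiv_smoothOn hU hk1))).sub
      (ContDiffOn.const_smul _ (fderiv_smoothOn hU hb1)))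
  have hAfS : ContDiffOn ℝ (⊤ : ℕ∞) (Afun a2 K) (U ×ˢ (Set.univ : Set ℝ)) :=
    contDiffOn_const.mul (((hSf a2 ha2).add (contDiffOn_const.mul (hSsnd.pow 2))).sub
      (contDiffOn_const.mul (hSf K hK)))
  refine ⟨αW ω2 ω3 a1, βW ω2 ω3 a1, γW ω1 ω2 ω3 φ ρ a1 a2 K s1 b2 k2,
    I0W ω1 ω2 ω3 φ a1 a2 K s1 s2 b1 b2 c1 k1, T1W a2 K,
    T6W ω1 ω2 ω3 φ a1 a2 K s2 b1 c2 c3 k1, T7W ω1 ω2 ω3 φ ρ a2 K s1 s2 b1 b2 k1 k2,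
    ?_, ?_, ?_, ?_, ?_, ?_, ?_, ?_, ?_, ?_, ?_, ?_⟩
  · -- α smooth
    unfold αW
    exact ((contDiffOn_const.mul (hSf a1 ha1)).smul (hSpb ω3 hω3)).add
      ((contDiffOn_const.mul hSsnd).smul (hSpb ω2 hω2))
  · -- β smooth
    unfold βW
    exact ((contDiffOn_const.mul (hSf a1 ha1)).smul (hSpb ω3 hω3)).add
      ((contDiffOn_const.mul hSsnd).smul (hSpb ω2 hω2))
  · -- γ smooth
    unfold γW g0W σZ θ₂Z
    refine ContDiffOn.add (ContDiffOn.add (ContDiffOn.add ?_ ?_) ?_) ?_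
    · exact (contDiffOn_const.mul (((hSf K hK).add (contDiffOn_const.mul
        (hSf a2 ha2))).sub (hSsnd.pow 2))).smul
        ((hSpb ω1 hω1).sub ((contDiffOn_const.mul hSsnd).smul (hSpb ω3 hω3)))
    · exact (contDiffOn_const.mul (((((((((contDiffOn_const.mul (hSf K hK)).mul
        hSsnd).add ((contDiffOn_const.mul (hSf a2 ha2)).mul hSsnd)).sub
        (contDiffOn_const.mul (hSf b2 hb2))).add (contDiffOn_const.mul
        (hSf k2 hk2))).sub (hSf _ (hcmpS ρ hρ 1))).add (contDiffOn_const.mul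
        (hSf s1 hs1))).sub (contDiffOn_const.mul (hSsnd.pow 3))))).smul
        (hSpb ω3 hω3)
    · exact (contDiffOn_const.mul (hSf a1 ha1)).smul (hSpb ω2 hω2)
    · exact (contDiffOn_const.mul hSsnd).smul
        (((hSpb φ hφ).sub (hSsnd.smul (hSpb ω1 hω1))).add (hAfS.smul (hSpb ω3 hω3)))
  · -- I0 smooth
    unfold I0W
    exact (((((((((((contDiffOn_const.mul ((hSf K hK).pow 2)).add
      (((contDiffOn_const.mul (hSf K hK)).mul (hSf a2 ha2)))).sub
      ((contDiffOn_const.mul (hSf K hK)).mul (hSsnd.pow 2))).sub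
      (contDiffOn_const.mul ((hSf a1 ha1).pow 2))).sub
      (contDiffOn_const.mul ((hSf a2 ha2).pow 2))).sub
      ((contDiffOn_const.mul (hSf a2 ha2)).mul (hSsnd.pow 2))).sub
      ((contDiffOn_const.mul (hSf b2 hb2)).mul hSsnd)).add
      (hSf c1 hc1)).add (hSf _ (hcmpS _ hμS 0))).add
      ((hSf _ (hcmpS _ hμS 3)).mul hSsnd)).sub
      ((contDiffOn_const.mul (hSf s1 hs1)).mul hSsnd)).add
      (contDiffOn_const.mul (hSsnd.pow 4))
  · -- T1 smooth
    unfold T1W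
    exact contDiffOn_const.mul (((contDiffOn_const.mul (hSf K hK)).sub
      (contDiffOn_const.mul (hSf a2 ha2))).add (contDiffOn_const.mul (hSsnd.pow 2)))
  · -- T6 smooth
    unfold T6W
    exact (((((((((contDiffOn_const.mul (hSf K hK)).mul (hSf a1 ha1)).add
      ((contDiffOn_const.mul (hSf a1 ha1)).mul (hSf a2 ha2))).sub
      ((contDiffOn_const.mul (hSf a1 ha1)).mul (hSsnd.pow 2))).sub
      ((contDiffOn_const.mul (hSf b1 hb1)).mul hSsnd)).sub
      (contDiffOn_const.mul (hSf c2 hc2))).add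
      (contDiffOn_const.mul (hSf c3 hc3))).sub
      ((contDiffOn_const.mul (hSf k1 hk1)).mul hSsnd)).sub
      (hSf _ (hcmpS _ hμS 1))).add
      ((contDiffOn_const.mul (hSf s2 hs2)).mul hSsnd)
  · -- T7 smooth
    unfold T7W g0W
    exact (((((contDiffOn_const.mul (hSf K hK)).mul hSsnd).add
      ((contDiffOn_const.mul (hSf a2 ha2)).mul hSsnd)).sub
      (hSf _ (hcmpS _ hμS 3))).sub (contDiffOn_const.mul (hSsnd.pow 3))).sub
      (contDiffOn_const.mul (((((((((contDiffOn_const.mul (hSf K hK)).mul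
        hSsnd).add ((contDiffOn_const.mul (hSf a2 ha2)).mul hSsnd)).sub
        (contDiffOn_const.mul (hSf b2 hb2))).add (contDiffOn_const.mul
        (hSf k2 hk2))).sub (hSf _ (hcmpS ρ hρ 1))).add (contDiffOn_const.mul
        (hSf s1 hs1))).sub (contDiffOn_const.mul (hSsnd.pow 3)))))
  · -- equation for dσ
    intro z hz u v
    rw [hdσL z hz.1 u v, hdω1 z.1 hz.1 u.1 v.1, hdω3 z.1 hz.1 u.1 v.1]
    simp only [αW, T1W, wedge, σZ, θ₀Z, θ₁Z, θ₂Z, θ₃Z, pb, dxZ, Afun, Bfun,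
      ContinuousLinearMap.add_apply, ContinuousLinearMap.sub_apply,
      ContinuousLinearMap.smul_apply, ContinuousLinearMap.coe_comp',
      Function.comp_apply, ContinuousLinearMap.coe_fst', ContinuousLinearMap.coe_snd',
      smul_eq_mul]
    ring
  · -- equation for dθ0
    intro z hz u v
    rw [hdθ0L z hz.1 u v, hdω3 z.1 hz.1 u.1 v.1]
    simp only [βW, wedge, σZ, θ₀Z, θ₁Z, pb,
      ContinuousLinearMap.add_apply, ContinuousLinearMap.sub_apply,
      ContinuousLinearMap.smul_apply, ContinuousLinearMap.coe_comp',
      Function.comp_apply, ContinuousLinearMap.coe_fst', smul_eq_mul]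
    ring
  · -- equation for dθ1
    intro z hz u v
    rw [hdθ1L z hz.1 u v, hdω2 z.1 hz.1 u.1 v.1]
    simp only [αW, βW, γW, g0W, wedge, σZ, θ₀Z, θ₁Z, θ₂Z, pb, dxZ, Afun,
      ContinuousLinearMap.add_apply, ContinuousLinearMap.sub_apply,
      ContinuousLinearMap.smul_apply, ContinuousLinearMap.coe_comp',
      Function.comp_apply, ContinuousLinearMap.coe_fst', ContinuousLinearMap.coe_snd',
      smul_eq_mul]
    ring
  · -- equation for dθ2
    intro z hz u v
    rw [hdθ2L z hz.1 u v, hdφ z.1 hz.1 u.1 v.1, hdω1 z.1 hz.1 u.1 v.1,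
      hdω3 z.1 hz.1 u.1 v.1, hda2 z.1 hz.1, hdK z.1 hz.1]
    simp only [αW, βW, γW, g0W, wedge, σZ, θ₀Z, θ₁Z, θ₂Z, θ₃Z, pb, dxZ, Afun, Bfun,
      ContinuousLinearMap.add_apply, ContinuousLinearMap.sub_apply,
      ContinuousLinearMap.smul_apply, ContinuousLinearMap.coe_comp',
      Function.comp_apply, ContinuousLinearMap.coe_fst', ContinuousLinearMap.coe_snd',
      smul_eq_mul]
    linear_combination (ω3 z.1 v.1) * hρdec z.1 hz.1 u.1 - (ω3 z.1 u.1) * hρdec z.1 hz.1 v.1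
  · -- equation for dθ3
    intro z hz u v
    rw [hdθ3L z hz.1 u v, hdω1 z.1 hz.1 u.1 v.1, hdω2 z.1 hz.1 u.1 v.1,
      hdω3 z.1 hz.1 u.1 v.1, hda1 z.1 hz.1, hda2 z.1 hz.1, hdK z.1 hz.1]
    simp only [αW, βW, γW, g0W, I0W, T6W, T7W, wedge, σZ, θ₀Z, θ₁Z, θ₂Z, θ₃Z, pb,
      dxZ, Afun, Bfun,
      ContinuousLinearMap.add_apply, ContinuousLinearMap.sub_apply,
      ContinuousLinearMap.smul_apply, ContinuousLinearMap.coe_comp',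
      Function.comp_apply, ContinuousLinearMap.coe_fst', ContinuousLinearMap.coe_snd',
      smul_eq_mul]
    linear_combination (ω3 z.1 v.1) * hμdec z.1 hz.1 u.1 - (ω3 z.1 u.1) * hμdec z.1 hz.1 v.1
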